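/- arXiv:math/0304355 — 2 statements merged into one kernel-verified Lean document; each statement's English description precedes it below -/
import Mathlib

section
/- Assume that E is cofinal (for every v ∈ V and every infinite path z ∈ Z there exists n and a finite path from v to r(z_n)) and that for every v ∈ V and every w ∈ V_∞ there is a finite path from v to w. Then the path groupoid is minimal: the only nonempty open subset of X that is invariant under tail equivalence is X itself. -/
namespace GraphCstar

/-- A directed graph: vertices, edges, source and range maps. -/
structure Graph where
  V : Type
  Ed : Type
  src : Ed → V
  rng : Ed → V

variable (G : Graph)

/-- Validity of a list of edges as a path starting at vertex `v`. -/
def Valid : G.V → List G.Ed → Prop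
  | _, [] => True
  | v, e :: l => G.src e = v ∧ Valid (G.rng e) l

/-- Terminal vertex of a list of edges starting at `v`. -/
def rngTo : G.V → List G.Ed → G.V
  | v, [] => v
  | _, e :: l => rngTo (G.rng e) l

theorem valid_append (l₁ l₂ : List G.Ed) (v : G.V) :
    Valid G v (l₁ ++ l₂) ↔ Valid G v l₁ ∧ Valid G (rngTo G v l₁) l₂ := by
  induction l₁ generalizing v with
  | nil => simp [Valid, rngTo]
  | cons e l ih => simp [Valid, rngTo, ih, and_assoc]

theorem rngTo_append (l₁ l₂ : List G.Ed) (v : G.V) :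
    rngTo G v (l₁ ++ l₂) = rngTo G (rngTo G v l₁) l₂ := by
  induction l₁ generalizing v with
  | nil => rfl
  | cons e l ih => simp [rngTo, ih]

theorem valid_drop {v : G.V} {l : List G.Ed} (n : ℕ) (h : Valid G v l) :
    Valid G (rngTo G v (l.take n)) (l.drop n) := by
  have h' : Valid G v (l.take n ++ l.drop n) := by
    rw [List.take_append_drop]; exact h
  exact ((valid_append G _ _ _).mp h').2

/-- A finite path in the graph `G`; vertices are the paths of length `0`. -/
structure FinPath where
  start : G.V
  edges : List G.Ed
  valid : Valid G start edges

namespace FinPath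

variable {G}

/-- The terminal vertex (range) of a finite path. -/
def rngF (α : FinPath G) : G.V := rngTo G α.start α.edges

/-- The length of a finite path. -/
def len (α : FinPath G) : ℕ := α.edges.length

/-- The finite path of length `0` at the vertex `v`. -/
def vp (v : G.V) : FinPath G := ⟨v, [], trivial⟩

/-- The finite path consisting of the single edge `e`. -/
def ep (e : G.Ed) : FinPath G := ⟨G.src e, [e], ⟨rfl, trivial⟩⟩

/-- Concatenation of finite paths. -/
def concat (α β : FinPath G) (h : β.start = α.rngF) : FinPath G :=
  ⟨α.start, α.edges ++ β.edges,
    (valid_append G _ _ _).mpr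
      ⟨α.valid, by
        show Valid G α.rngF β.edges
        rw [← h]; exact β.valid⟩⟩

theorem rngF_concat (α β : FinPath G) (h : β.start = α.rngF) :
    (α.concat β h).rngF = β.rngF := by
  show rngTo G α.start (α.edges ++ β.edges) = _
  rw [rngTo_append]
  show rngTo G α.rngF β.edges = _
  rw [← h]; rfl

end FinPath

/-- `α` is an initial segment of `β`. -/
def IsPref (α β : FinPath G) : Prop := α.start = β.start ∧ α.edges <+: β.edges

/-- The "remainder" path: if `α` is an initial segment of `β`, the path `μ` with
`β = αμ` (for other inputs the value is junk). -/
def diff (α β : FinPath G) : FinPath G :=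
  ⟨rngTo G β.start (β.edges.take α.edges.length),
    β.edges.drop α.edges.length, valid_drop G _ β.valid⟩

open Classical in
/-- Totalized concatenation of finite paths (junk value when endpoints do not match). -/
noncomputable def catP (α β : FinPath G) : FinPath G :=
  if h : β.start = α.rngF then α.concat β h else α

open Classical in
/-- The product on `T = {(α,β) ∈ Y × Y : r(α) = r(β)} ∪ {z}`, with `z` encoded as `none`. -/
noncomputable def mulT :
    Option (FinPath G × FinPath G) → Option (FinPath G × FinPath G) →
      Option (FinPath G × FinPath G)
  | none, _ => none
  | _, none => none
  | some (α₁, β₁), some (α₂, β₂) =>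
    if IsPref G β₁ α₂ then some (catP G α₁ (diff G β₁ α₂), β₂)
    else if IsPref G α₂ β₁ then some (α₁, catP G β₂ (diff G α₂ β₁))
    else none

/-- The involution on `T`. -/
def starT :
    Option (FinPath G × FinPath G) → Option (FinPath G × FinPath G)
  | none => none
  | some (α, β) => some (β, α)

/-- The subset of `Option (FinPath G × FinPath G)` corresponding to
`T = {(α,β) : r(α) = r(β)} ∪ {z}`. -/
def TsetT : Set (Option (FinPath G × FinPath G)) :=
  {t | ∀ α β : FinPath G, t = some (α, β) → α.rngF = β.rngF}

/-- An infinite path in the graph `G`. -/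
structure InfPath where
  seq : ℕ → G.Ed
  valid : ∀ i, G.src (seq (i + 1)) = G.rng (seq i)

/-- The initial vertex of an infinite path. -/
def InfPath.start {G : Graph} (z : InfPath G) : G.V := G.src (z.seq 0)

/-- Prepending an edge to an infinite path. -/
def consInf (e : G.Ed) (z : InfPath G) (h : z.start = G.rng e) : InfPath G where
  seq := fun n =>
    match n with
    | 0 => e
    | m + 1 => z.seq m
  valid := fun i =>
    match i with
    | 0 => h
    | m + 1 => z.valid m

/-- Prepending a finite edge list to an infinite path (with the starting vertex recorded). -/
def appendInfAux :
    (l : List G.Ed) → (v : G.V) → Valid G v l → (z : InfPath G) →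
      z.start = rngTo G v l → {w : InfPath G // w.start = v}
  | [], _, _, z, h => ⟨z, h⟩
  | e :: l, v, hv, z, h =>
    let w := appendInfAux l (G.rng e) hv.2 z h
    ⟨consInf G e w.1 w.2, hv.1⟩

/-- Concatenation of a finite path with an infinite path. -/
def FinPath.concatInf {G : Graph} (α : FinPath G) (z : InfPath G)
    (h : z.start = α.rngF) : InfPath G :=
  (appendInfAux G α.edges α.start α.valid z h).1

/-- The path space `Y ∪ Z` of all finite and infinite paths. -/
def PathSp := FinPath G ⊕ InfPath G

/-- The initial vertex of a (finite or infinite) path. -/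
def startOf : PathSp G → G.V
  | .inl α => α.start
  | .inr z => z.start

/-- The length of a path, in `ℕ∞`. -/
def lenOf : PathSp G → ℕ∞
  | .inl α => (α.edges.length : ℕ∞)
  | .inr _ => ⊤

/-- The `i`-th edge (0-indexed) of a path, if it exists. -/
def nthEdge : PathSp G → ℕ → Option G.Ed
  | .inl α, i => α.edges[i]?
  | .inr z, i => some (z.seq i)

/-- `x = αγ` for some (finite or infinite, possibly length `0`) path `γ`;
that is, `α` is an initial segment of `x`, i.e. `x ∈ D_α`. -/
def Ext (α : FinPath G) (x : PathSp G) : Prop :=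
  (∃ (β : FinPath G) (h : β.start = α.rngF), x = .inl (α.concat β h)) ∨
  (∃ (w : InfPath G) (h : w.start = α.rngF), x = .inr (α.concatInf w h))

/-- The basic set `D_α ⊆ Y ∪ Z`. -/
def Dset (α : FinPath G) : Set (PathSp G) := {x | Ext G α x}

/-- The topology on the path space, generated by the sets `D_α` and their complements. -/
def pathTop : TopologicalSpace (PathSp G) :=
  .generateFrom (Set.range (Dset G) ∪ Set.range fun α => (Dset G α)ᶜ)

/-- The vertex `v` emits infinitely many edges. -/
def Vinf (v : G.V) : Prop := {e | G.src e = v}.Infinite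

/-- Membership in `X = Y_∞ ∪ Z`. -/
def memX : PathSp G → Prop
  | .inl α => Vinf G α.rngF
  | .inr _ => True

/-- The set `X = Y_∞ ∪ Z`. -/
def Xset : Set (PathSp G) := {x | memX G x}

/-- Tail equivalence of paths: `x = αγ` and `y = βγ` for finite paths `α, β`
and a common (finite or infinite) path `γ`. -/
def TailEq (x y : PathSp G) : Prop :=
  (∃ (α β γ : FinPath G) (h₁ : γ.start = α.rngF) (h₂ : γ.start = β.rngF),
      x = .inl (α.concat γ h₁) ∧ y = .inl (β.concat γ h₂)) ∨
  (∃ (α β : FinPath G) (w : InfPath G) (h₁ : w.start = α.rngF)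
      (h₂ : w.start = β.rngF),
      x = .inr (α.concatInf w h₁) ∧ y = .inr (β.concatInf w h₂))

/-- A subset of the path space is invariant (a union of tail-equivalence classes). -/
def InvariantS (F : Set (PathSp G)) : Prop :=
  ∀ x ∈ F, ∀ y, TailEq G x y → y ∈ F

/-- Membership `(x, k, y) ∈ G` for the path groupoid: `x = αγ`, `y = βγ` and
`k = l(α) - l(β)`. -/
def InG (x : PathSp G) (k : ℤ) (y : PathSp G) : Prop :=
  (∃ (α β γ : FinPath G) (h₁ : γ.start = α.rngF) (h₂ : γ.start = β.rngF),
      x = .inl (α.concat γ h₁) ∧ y = .inl (β.concat γ h₂) ∧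
        k = (α.len : ℤ) - (β.len : ℤ)) ∨
  (∃ (α β : FinPath G) (w : InfPath G) (h₁ : w.start = α.rngF)
      (h₂ : w.start = β.rngF),
      x = .inr (α.concatInf w h₁) ∧ y = .inr (β.concatInf w h₂) ∧
        k = (α.len : ℤ) - (β.len : ℤ))

/-- There is a finite path from `u` to `w`. -/
def Reach (u w : G.V) : Prop := ∃ β : FinPath G, β.start = u ∧ β.rngF = w

/-- A loop based at the vertex `v`. -/
def LoopAt (v : G.V) (α : FinPath G) : Prop :=
  α.edges ≠ [] ∧ α.start = v ∧ α.rngF = v ∧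
    ∀ i e, i + 1 < α.edges.length → α.edges[i]? = some e → G.rng e ≠ v

/-- Condition (K): no vertex has exactly one loop based at it. -/
def CondK : Prop := ¬ ∃ v : G.V, ∃! α : FinPath G, LoopAt G v α

/-- A point of the path space has trivial isotropy if whenever `x = αγ = βγ`
then `l(α) = l(β)`. -/
def TrivIso (x : PathSp G) : Prop :=
  ∀ α β : FinPath G,
    ((∃ (γ : FinPath G) (h₁ : γ.start = α.rngF) (h₂ : γ.start = β.rngF),
        x = .inl (α.concat γ h₁) ∧ x = .inl (β.concat γ h₂)) ∨
     (∃ (w : InfPath G) (h₁ : w.start = α.rngF) (h₂ : w.start = β.rngF),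
        x = .inr (α.concatInf w h₁) ∧ x = .inr (β.concatInf w h₂))) →
    α.len = β.len


/-!
Every open set containing a point `x ∈ X` contains a whole cylinder `D_τ`. For an infinite
path `x` take for `τ` a long enough initial segment of `x`. For a finite path `x = α` with
`r(α) ∈ V_∞` take `τ = αe`: a subbasic set `D_βᶜ ∋ α` rules out at most the single edge
`e = β_{|α|}`, so all but finitely many of the infinitely many edges `e` leaving `r(α)` work.
Every point `y ∈ X` is then tail equivalent to a point of `D_τ ∩ X`: if `y` is finite, prolong
`τ` by a path to `r(y) ∈ V_∞`; if `y` is infinite, prolong it by a path to some `r(y_n)`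
(cofinality) followed by the tail `y_{n+1} y_{n+2} ⋯`. Invariance puts `y` in `U`.
-/

section PathPrefixes

variable {G : Graph}

@[ext]
theorem FinPath.ext {α β : FinPath G} (hs : α.start = β.start) (he : α.edges = β.edges) :
    α = β := by
  cases α; cases β; simp_all

@[ext]
theorem InfPath.ext {z w : InfPath G} (h : z.seq = w.seq) : z = w := by
  cases z; cases w; simp_all

theorem FinPath.concat_vp {α : FinPath G} {v : G.V} (h : (FinPath.vp v).start = α.rngF) :
    α.concat (FinPath.vp v) h = α :=
  FinPath.ext rfl (List.append_nil _)

theorem appendInfAux_seq (l : List G.Ed) (v : G.V) (hv : Valid G v l)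
    (z : InfPath G) (h : z.start = rngTo G v l) (i : ℕ) :
    (appendInfAux G l v hv z h).1.seq i =
      if hi : i < l.length then l[i] else z.seq (i - l.length) := by
  induction l generalizing v i with
  | nil => simp [appendInfAux]
  | cons e l ih =>
    cases i with
    | zero => simp [appendInfAux, consInf]
    | succ m =>
      show (appendInfAux G l (G.rng e) hv.2 z h).1.seq m = _
      rw [ih (G.rng e) hv.2 h m]
      simp only [List.length_cons, Nat.add_lt_add_iff_right, List.getElem_cons_succ,
        Nat.add_sub_add_right]

theorem FinPath.concatInf_seq (α : FinPath G) (w : InfPath G) (h : w.start = α.rngF) (i : ℕ) :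
    (α.concatInf w h).seq i =
      if hi : i < α.edges.length then α.edges[i] else w.seq (i - α.edges.length) :=
  appendInfAux_seq _ _ _ _ _ _

theorem FinPath.concatInf_start (α : FinPath G) (w : InfPath G) (h : w.start = α.rngF) :
    (α.concatInf w h).start = α.start :=
  (appendInfAux G α.edges α.start α.valid w h).2

def InfPath.drop (z : InfPath G) (k : ℕ) : InfPath G where
  seq i := z.seq (k + i)
  valid i := z.valid (k + i)

theorem valid_ofFn_seq (z : InfPath G) (m k : ℕ) :
    Valid G (G.src (z.seq k)) (List.ofFn fun i : Fin m => z.seq (k + i)) := by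
  induction m generalizing k with
  | zero => trivial
  | succ m ih =>
    rw [List.ofFn_succ]
    refine ⟨rfl, ?_⟩
    simp only [Fin.val_zero, Nat.add_zero, Fin.val_succ, ← z.valid k]
    simpa only [Nat.add_assoc, Nat.add_comm 1] using ih (k + 1)

def InfPath.take (z : InfPath G) (m : ℕ) : FinPath G :=
  ⟨z.start, List.ofFn fun i : Fin m => z.seq i, by
    have h := valid_ofFn_seq z m 0
    simp only [Nat.zero_add] at h
    exact h⟩

theorem InfPath.take_edges_length (z : InfPath G) (m : ℕ) : (z.take m).edges.length = m :=
  List.length_ofFn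

theorem src_seq_add_length (z : InfPath G) {l : List G.Ed} {v : G.V} {k : ℕ} (hl : Valid G v l)
    (hz : ∀ i (hi : i < l.length), z.seq (k + i) = l[i]) (hv : G.src (z.seq k) = v) :
    G.src (z.seq (k + l.length)) = rngTo G v l := by
  induction l generalizing v k with
  | nil => exact hv
  | cons e l ih =>
    have he : z.seq k = e := hz 0 (by simp)
    have := ih hl.2 (k := k + 1) (fun i hi => by
      have hzi := hz (i + 1) (by simpa using hi)
      rw [List.getElem_cons_succ] at hzi
      simpa [Nat.add_assoc, Nat.add_comm 1] using hzi)
      (by rw [z.valid k, he])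
    simpa [rngTo, Nat.add_assoc, Nat.add_comm 1] using this

def IsPrefixOf (α : FinPath G) (x : PathSp G) : Prop :=
  startOf G x = α.start ∧ ∀ i (hi : i < α.edges.length), nthEdge G x i = some α.edges[i]

theorem isPrefixOf_of_ext {α : FinPath G} {x : PathSp G} (h : Ext G α x) : IsPrefixOf α x := by
  rcases h with ⟨β, hβ, rfl⟩ | ⟨w, hw, rfl⟩
  · exact ⟨rfl, fun i hi =>
      (List.getElem?_append_left hi).trans (List.getElem?_eq_getElem hi)⟩
  · refine ⟨FinPath.concatInf_start α w hw, fun i hi => ?_⟩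
    show some ((α.concatInf w hw).seq i) = _
    rw [FinPath.concatInf_seq, dif_pos hi]

theorem ext_inl_of_isPrefixOf {α γ : FinPath G} (h : IsPrefixOf α (.inl γ)) :
    Ext G α (.inl γ) := by
  have hp : α.edges <+: γ.edges := List.prefix_iff_getElem?.mpr h.2
  have hs : γ.start = α.start := h.1
  have hdiff : (diff G α γ).start = α.rngF := by
    show rngTo G γ.start (γ.edges.take α.edges.length) = rngTo G α.start α.edges
    rw [hs, ← List.prefix_iff_eq_take.mp hp]
  exact Or.inl ⟨diff G α γ, hdiff,
    congrArg Sum.inl (FinPath.ext hs (List.prefix_iff_eq_append.mp hp).symm)⟩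

theorem ext_inr_of_isPrefixOf {α : FinPath G} {z : InfPath G} (h : IsPrefixOf α (.inr z)) :
    Ext G α (.inr z) := by
  have hseq : ∀ i (hi : i < α.edges.length), z.seq i = α.edges[i] :=
    fun i hi => Option.some.inj (h.2 i hi)
  have hdrop : (z.drop α.edges.length).start = α.rngF := by
    simpa [InfPath.drop, InfPath.start, FinPath.rngF] using
      src_seq_add_length z α.valid (k := 0) (by simpa using hseq) h.1
  refine Or.inr ⟨z.drop α.edges.length, hdrop,
    congrArg Sum.inr (InfPath.ext (funext fun i => ?_))⟩
  rw [FinPath.concatInf_seq]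
  split_ifs with hi
  · exact hseq i hi
  · show z.seq i = z.seq (α.edges.length + (i - α.edges.length))
    congr 1
    omega

theorem ext_iff_isPrefixOf {α : FinPath G} {x : PathSp G} : Ext G α x ↔ IsPrefixOf α x := by
  refine ⟨isPrefixOf_of_ext, fun h => ?_⟩
  cases x with
  | inl γ => exact ext_inl_of_isPrefixOf h
  | inr z => exact ext_inr_of_isPrefixOf h

theorem ext_concat (α β : FinPath G) (h : β.start = α.rngF) :
    Ext G α (.inl (α.concat β h)) :=
  Or.inl ⟨β, h, rfl⟩

theorem ext_concatInf (α : FinPath G) (w : InfPath G) (h : w.start = α.rngF) :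
    Ext G α (.inr (α.concatInf w h)) :=
  Or.inr ⟨w, h, rfl⟩

theorem InfPath.ext_take (z : InfPath G) (m : ℕ) : Ext G (z.take m) (.inr z) :=
  ext_iff_isPrefixOf.mpr ⟨rfl, fun i hi => by simp [InfPath.take, nthEdge]⟩

theorem Ext.nthEdge_eq {τ : FinPath G} {u : PathSp G} (h : Ext G τ u) {i : ℕ}
    (hi : i < τ.edges.length) : nthEdge G u i = some τ.edges[i] :=
  (isPrefixOf_of_ext h).2 i hi

theorem Ext.length_le {β τ : FinPath G} (h : Ext G β (.inl τ)) :
    β.edges.length ≤ τ.edges.length :=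
  (List.prefix_iff_getElem?.mpr (isPrefixOf_of_ext h).2).length_le

theorem Ext.trans {β τ : FinPath G} {u : PathSp G} (h₁ : Ext G β (.inl τ))
    (h₂ : Ext G τ u) : Ext G β u := by
  obtain ⟨hs₁, he₁⟩ := isPrefixOf_of_ext h₁
  refine ext_iff_isPrefixOf.mpr ⟨(isPrefixOf_of_ext h₂).1.trans hs₁, fun i hi => ?_⟩
  have hτ : i < τ.edges.length := hi.trans_le h₁.length_le
  rw [h₂.nthEdge_eq hτ, ← List.getElem?_eq_getElem hτ]
  exact he₁ i hi

theorem Ext.of_ext_of_length_le {β τ : FinPath G} {u : PathSp G} (hβ : Ext G β u)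
    (hτ : Ext G τ u) (hl : β.edges.length ≤ τ.edges.length) : Ext G β (.inl τ) := by
  refine ext_iff_isPrefixOf.mpr
    ⟨(isPrefixOf_of_ext hτ).1.symm.trans (isPrefixOf_of_ext hβ).1, fun i hi => ?_⟩
  have hτi : i < τ.edges.length := hi.trans_le hl
  show τ.edges[i]? = _
  rw [List.getElem?_eq_getElem hτi, ← hτ.nthEdge_eq hτi, hβ.nthEdge_eq hi]

end PathPrefixes

section Neighbourhoods

open Filter Topology

variable {G : Graph}

theorem exists_dset_subset_of_eventually {ι : Type*} {f : Filter ι} [f.NeBot]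
    {τ : ι → FinPath G} {x : PathSp G}
    (hD : ∀ β, Ext G β x → ∀ᶠ i in f, Dset G (τ i) ⊆ Dset G β)
    (hDc : ∀ β, ¬ Ext G β x → ∀ᶠ i in f, Disjoint (Dset G (τ i)) (Dset G β))
    {O : Set (PathSp G)} (hO : @IsOpen (PathSp G) (pathTop G) O) (hx : x ∈ O) :
    ∃ i, Dset G (τ i) ⊆ O := by
  let _ : TopologicalSpace (PathSp G) := pathTop G
  have hle : f.bind (fun i => 𝓟 (Dset G (τ i))) ≤ 𝓝 x := by
    show _ ≤ @nhds _ (TopologicalSpace.generateFrom _) x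
    rw [TopologicalSpace.nhds_generateFrom]
    refine le_iInf₂ fun s ⟨hxs, hs⟩ => le_principal_iff.mpr (Filter.mem_bind'.mpr ?_)
    rcases hs with ⟨β, rfl⟩ | ⟨β, rfl⟩
    · exact hD β hxs
    · exact (hDc β hxs).mono fun i h => h.subset_compl_right
  have hO' : ∀ᶠ i in f, Dset G (τ i) ⊆ O := Filter.mem_bind'.mp (hle (hO.mem_nhds hx))
  exact hO'.exists

theorem exists_dset_subset_of_isOpen_inr {z : InfPath G} {O : Set (PathSp G)}
    (hO : @IsOpen (PathSp G) (pathTop G) O) (hz : .inr z ∈ O) : ∃ τ, Dset G τ ⊆ O := by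
  refine (exists_dset_subset_of_eventually (f := atTop) (τ := z.take) ?_ ?_ hO hz).elim
    fun _ h => ⟨_, h⟩
  · intro β hβ
    filter_upwards [eventually_ge_atTop β.edges.length] with n hn u hu
    rw [← z.take_edges_length n] at hn
    exact (hβ.of_ext_of_length_le (z.ext_take n) hn).trans hu
  · intro β hβ
    filter_upwards [eventually_ge_atTop β.edges.length] with n hn
    rw [← z.take_edges_length n] at hn
    exact Set.disjoint_left.mpr fun u hu hβu =>
      hβ ((hβu.of_ext_of_length_le hu hn).trans (z.ext_take n))

theorem exists_dset_subset_of_isOpen_inl {α : FinPath G} (hα : Vinf G α.rngF)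
    {O : Set (PathSp G)} (hO : @IsOpen (PathSp G) (pathTop G) O) (hx : .inl α ∈ O) :
    ∃ τ, Dset G τ ⊆ O := by
  have : Infinite {e // G.src e = α.rngF} := hα.to_subtype
  refine (exists_dset_subset_of_eventually (f := cofinite)
    (τ := fun e : {e // G.src e = α.rngF} => α.concat (FinPath.ep e.1) e.2) ?_ ?_ hO hx).elim
    fun _ h => ⟨_, h⟩
  · intro β hβ
    exact Eventually.of_forall fun e u hu => (hβ.trans (ext_concat _ _ _)).trans hu
  · intro β hβ
    have hfin : {e : {e // G.src e = α.rngF} | β.edges[α.edges.length]? = some e.1}.Finite :=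
      Set.Subsingleton.finite fun e he e' he' => Subtype.ext (Option.some.inj (he.symm.trans he'))
    filter_upwards [hfin.compl_mem_cofinite] with e he
    refine Set.disjoint_left.mpr fun u hu hβu => ?_
    rcases le_or_gt β.edges.length α.edges.length with hl | hl
    · exact hβ (hβu.of_ext_of_length_le ((ext_concat _ _ _).trans hu) hl)
    · have hαe : α.edges.length < (α.concat (FinPath.ep e.1) e.2).edges.length := by
        simp [FinPath.concat, FinPath.ep]
      refine he ?_
      have h := (hβu.nthEdge_eq hl).symm.trans (hu.nthEdge_eq hαe)
      simpa [FinPath.concat, FinPath.ep, List.getElem?_eq_getElem hl] using h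

theorem exists_dset_subset_of_isOpen {x : PathSp G} (hxX : x ∈ Xset G) {O : Set (PathSp G)}
    (hO : @IsOpen (PathSp G) (pathTop G) O) (hx : x ∈ O) : ∃ τ, Dset G τ ⊆ O := by
  cases x with
  | inl α => exact exists_dset_subset_of_isOpen_inl hxX hO hx
  | inr z => exact exists_dset_subset_of_isOpen_inr hO hx

end Neighbourhoods

section TailEquivalence

variable {G : Graph}

theorem exists_ext_tailEq_inl {τ δ : FinPath G} (hδ : Vinf G δ.rngF)
    (hr : Reach G τ.rngF δ.rngF) :
    ∃ u, Ext G τ u ∧ u ∈ Xset G ∧ TailEq G u (.inl δ) := by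
  obtain ⟨μ, hμs, hμr⟩ := hr
  have hvp : (FinPath.vp δ.rngF).start = (τ.concat μ hμs).rngF := by
    rw [FinPath.rngF_concat, hμr]; rfl
  refine ⟨.inl (τ.concat μ hμs), ext_concat _ _ _, ?_,
    Or.inl ⟨τ.concat μ hμs, δ, FinPath.vp δ.rngF, hvp, rfl, ?_, ?_⟩⟩
  · show Vinf G (τ.concat μ hμs).rngF
    rwa [FinPath.rngF_concat, hμr]
  · exact congrArg Sum.inl (FinPath.concat_vp _).symm
  · exact congrArg Sum.inl (FinPath.concat_vp _).symm

theorem exists_ext_tailEq_inr {τ : FinPath G} {z : InfPath G} {n : ℕ}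
    (hr : Reach G τ.rngF (G.rng (z.seq n))) :
    ∃ u, Ext G τ u ∧ u ∈ Xset G ∧ TailEq G u (.inr z) := by
  obtain ⟨μ, hμs, hμr⟩ := hr
  obtain ⟨_, _, hz⟩ | ⟨w, hw, hz⟩ := z.ext_take (n + 1)
  · exact absurd hz Sum.inr_ne_inl
  have hseq : z.seq (n + 1) = w.seq 0 := by
    rw [congrFun (congrArg InfPath.seq (Sum.inr.inj hz)) (n + 1), FinPath.concatInf_seq,
      dif_neg (by simp [InfPath.take_edges_length]), InfPath.take_edges_length, Nat.sub_self]
  have hws : w.start = (τ.concat μ hμs).rngF := by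
    show G.src (w.seq 0) = _
    rw [← hseq, z.valid n, FinPath.rngF_concat, hμr]
  exact ⟨.inr ((τ.concat μ hμs).concatInf w hws),
    (ext_concat _ _ _).trans (ext_concatInf _ _ _),
    trivial, Or.inr ⟨τ.concat μ hμs, z.take (n + 1), w, hws, hw, rfl, hz⟩⟩

end TailEquivalence

theorem path_groupoid_minimal_general (G : Graph)
    (hcof : ∀ (v : G.V) (z : InfPath G), ∃ n : ℕ, Reach G v (G.rng (z.seq n)))
    (hinf : ∀ v w : G.V, Vinf G w → Reach G v w) :
    ∀ U : Set (PathSp G), U ⊆ Xset G →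
      (∃ O : Set (PathSp G), @IsOpen (PathSp G) (pathTop G) O ∧ U = O ∩ Xset G) →
      U.Nonempty → InvariantS G U → U = Xset G := by
  rintro U - ⟨O, hO, rfl⟩ ⟨x, hxO, hxX⟩ hinv
  obtain ⟨τ, hτ⟩ := exists_dset_subset_of_isOpen hxX hO hxO
  refine Set.Subset.antisymm Set.inter_subset_right fun y hy => ?_
  obtain ⟨u, hτu, huX, hu⟩ : ∃ u, Ext G τ u ∧ u ∈ Xset G ∧ TailEq G u y := by
    cases y with
    | inl δ => exact exists_ext_tailEq_inl hy (hinf _ _ hy)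
    | inr z =>
      obtain ⟨n, hn⟩ := hcof τ.rngF z
      exact exists_ext_tailEq_inr hn
  exact hinv u ⟨hτ hτu, huX⟩ y hu

/-- Assume `E` is cofinal and that every vertex reaches every vertex
of `V_∞`. Then the path groupoid is minimal: the only nonempty open invariant subset of
`X` is `X` itself. -/
theorem path_groupoid_minimal (G : Graph) [Countable G.V] [Countable G.Ed]
    (hns : ∀ v : G.V, ∃ e : G.Ed, G.src e = v)
    (hcof : ∀ (v : G.V) (z : InfPath G), ∃ n : ℕ, Reach G v (G.rng (z.seq n)))
    (hinf : ∀ v w : G.V, Vinf G w → Reach G v w) :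
    ∀ U : Set (PathSp G), U ⊆ Xset G →
      (∃ O : Set (PathSp G), @IsOpen (PathSp G) (pathTop G) O ∧ U = O ∩ Xset G) →
      U.Nonempty → InvariantS G U → U = Xset G :=
  path_groupoid_minimal_general G hcof hinf

end GraphCstar
end

section
/- The following are equivalent: (1) E satisfies condition (K) (no vertex has exactly one loop based at it), E is cofinal (for every v ∈ V and every infinite path z there exist n and a finite path from v to r(z_n)), and for every v ∈ V and w ∈ V_∞ there is a finite path from v to w; (2) every loop in E has an exit (for some edge e_i of the loop there is an edge f ≠ e_i with s(f) = s(e_i)), and for every v ∈ V the smallest hereditary saturated subset of V containing v is V itself. -/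
namespace GraphCstar

variable (G : Graph)

/-- A subset `H ⊆ V` is hereditary. -/
def Hered (H : Set G.V) : Prop := ∀ v ∈ H, ∀ w : G.V, Reach G v w → w ∈ H

/-- A subset `H ⊆ V` is saturated. -/
def Satur (H : Set G.V) : Prop :=
  ∀ w : G.V, {e : G.Ed | G.src e = w}.Finite →
    (∀ e : G.Ed, G.src e = w → G.rng e ∈ H) → w ∈ H

/-- The loop `α` has an exit: for some edge `e_i` of `α` there is an edge `f ≠ e_i`
with `s(f) = s(e_i)`. -/
def HasExit (α : FinPath G) : Prop :=
  ∃ (i : ℕ) (e : G.Ed), α.edges[i]? = some e ∧ ∃ f : G.Ed, f ≠ e ∧ G.src f = G.src e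

/-! For `(1 ⇒ 2)`: along a loop without exit every edge is forced, so any loop at its base
is a prefix of it or conversely, hence equal to it, against (K). If a hereditary saturated
`H ∋ v` missed a vertex, saturation and `V_∞ ⊆ H` would let us walk forever outside `H`, and
cofinality would lead `v` into that walk.

For `(2 ⇒ 1)`: for a nonempty set `S` of vertices, each of which (when in `V_f`) has an
edge leading back to `S`, the vertices that cannot reach `S` form a hereditary saturated set
avoiding `S`, so every vertex reaches `S`. With `S` the range of an infinite path this is
cofinality, with `S = {w}` for `w ∈ V_∞` it is the third condition, and with `S = {v}` for
the base of a loop it shows that an exit of the loop returns to `v`, which yields a second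
loop at `v`. -/

attribute [ext] FinPath

def Cofinal : Prop :=
  ∀ (v : G.V) (z : InfPath G), ∃ n : ℕ, Reach G v (G.rng (z.seq n))

def HeredSaturTrivial : Prop :=
  ∀ v : G.V, ∀ H : Set G.V, Hered G H → Satur G H → v ∈ H → H = Set.univ

variable {G}

theorem reach_refl (u : G.V) : Reach G u u := ⟨FinPath.vp u, rfl, rfl⟩

theorem Reach.trans {u v w : G.V} (h₁ : Reach G u v) (h₂ : Reach G v w) : Reach G u w := by
  obtain ⟨α, rfl, rfl⟩ := h₁
  obtain ⟨β, hβ, rfl⟩ := h₂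
  exact ⟨α.concat β hβ, rfl, FinPath.rngF_concat α β hβ⟩

theorem reach_rngTo {w : G.V} {l : List G.Ed} (h : Valid G w l) : Reach G w (rngTo G w l) :=
  ⟨⟨w, l, h⟩, rfl, rfl⟩

theorem Reach.eq_or_exists_edge {u t : G.V} (h : Reach G u t) :
    u = t ∨ ∃ e, G.src e = u ∧ Reach G (G.rng e) t := by
  obtain ⟨⟨w, l, hl⟩, rfl, rfl⟩ := h
  cases l with
  | nil => exact Or.inl rfl
  | cons e l => exact Or.inr ⟨e, hl.1, reach_rngTo hl.2⟩

theorem valid_take {v : G.V} {l : List G.Ed} (n : ℕ) (h : Valid G v l) :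
    Valid G v (l.take n) := by
  rw [← List.take_append_drop n l, valid_append] at h
  exact h.1

theorem src_eq_rngTo_take {w : G.V} {l : List G.Ed} {i : ℕ} {e : G.Ed} (hl : Valid G w l)
    (he : l[i]? = some e) : G.src e = rngTo G w (l.take i) := by
  induction l generalizing w i with
  | nil => simp at he
  | cons a l ih =>
    cases i with
    | zero => simp only [List.getElem?_cons_zero, Option.some.injEq] at he; exact he ▸ hl.1
    | succ i => exact ih hl.2 he

theorem rngTo_take_succ {w : G.V} {l : List G.Ed} {i : ℕ} {e : G.Ed} (he : l[i]? = some e) :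
    rngTo G w (l.take (i + 1)) = G.rng e := by
  rw [List.take_add_one, he, Option.toList_some, rngTo_append]
  rfl

theorem prefix_or_prefix_of_forall_src_eq {w : G.V} {l₁ l₂ : List G.Ed} (h₁ : Valid G w l₁)
    (h₂ : Valid G w l₂) (hdet : ∀ e ∈ l₁, ∀ f, G.src f = G.src e → f = e) :
    l₁ <+: l₂ ∨ l₂ <+: l₁ := by
  induction l₁ generalizing w l₂ with
  | nil => exact Or.inl List.nil_prefix
  | cons a l₁ ih =>
    cases l₂ with
    | nil => exact Or.inr List.nil_prefix
    | cons b l₂ =>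
      obtain rfl : b = a := hdet a List.mem_cons_self b (h₂.1.trans h₁.1.symm)
      simp only [List.cons_prefix_cons, true_and]
      exact ih h₁.2 h₂.2 fun e he => hdet e (List.mem_cons_of_mem _ he)

theorem exists_infPath_forall_rng (P : G.V → Prop)
    (hP : ∀ x, P x → ∃ e, G.src e = x ∧ P (G.rng e)) {u : G.V} (hu : P u) :
    ∃ z : InfPath G, ∀ n, P (G.rng (z.seq n)) := by
  choose f hsrc hrng using fun x : {x // P x} => hP x.1 x.2
  let walk : ℕ → {x // P x} := fun n => Nat.rec ⟨u, hu⟩ (fun _ p => ⟨_, hrng p⟩) n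
  exact ⟨⟨fun n => f (walk n), fun i => hsrc (walk (i + 1))⟩, fun n => hrng (walk n)⟩

namespace LoopAt

variable {v : G.V} {α β : FinPath G}

theorem valid (hα : LoopAt G v α) : Valid G v α.edges := hα.2.1 ▸ α.valid

theorem rngTo_eq (hα : LoopAt G v α) : rngTo G v α.edges = v := hα.2.1 ▸ hα.2.2.1

theorem exists_edge_reach (hα : LoopAt G v α) : ∃ e, G.src e = v ∧ Reach G (G.rng e) v := by
  have hl := hα.valid
  have hr := hα.rngTo_eq
  cases h : α.edges with
  | nil => exact absurd h hα.1
  | cons e l =>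
    rw [h] at hl hr
    have hr' : rngTo G (G.rng e) l = v := hr
    exact ⟨e, hl.1, hr' ▸ reach_rngTo hl.2⟩

theorem rngTo_take_ne (hα : LoopAt G v α) {k : ℕ} (hk₀ : 0 < k) (hk : k < α.edges.length) :
    rngTo G v (α.edges.take k) ≠ v := by
  obtain ⟨i, rfl⟩ : ∃ i, k = i + 1 := ⟨k - 1, by omega⟩
  have he : α.edges[i]? = some α.edges[i] := List.getElem?_eq_getElem (by omega)
  rw [rngTo_take_succ he]
  exact hα.2.2.2 i _ hk he

theorem eq_of_prefix (hα : LoopAt G v α) (hβ : LoopAt G v β) (h : β.edges <+: α.edges) :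
    β = α := by
  have hlen : α.edges.length ≤ β.edges.length := by
    by_contra! hlt
    have hβ₀ : 0 < β.edges.length := List.length_pos_iff.mpr hβ.1
    apply hα.rngTo_take_ne hβ₀ hlt
    rw [← List.prefix_iff_eq_take.mp h]
    exact hβ.rngTo_eq
  exact FinPath.ext (hβ.2.1.trans hα.2.1.symm) (h.eq_of_length_le hlen)

theorem eq_of_not_hasExit (hα : LoopAt G v α) (hexit : ¬ HasExit G α) (hβ : LoopAt G v β) :
    β = α := by
  have hdet : ∀ e ∈ α.edges, ∀ f, G.src f = G.src e → f = e := by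
    intro e he f hf
    obtain ⟨i, hi⟩ := List.mem_iff_getElem?.mp he
    by_contra hfe
    exact hexit ⟨i, e, hi, f, hfe, hf⟩
  rcases prefix_or_prefix_of_forall_src_eq hα.valid hβ.valid hdet with h | h
  · exact (hβ.eq_of_prefix hα h).symm
  · exact hα.eq_of_prefix hβ h

theorem hasExit_of_condK (hα : LoopAt G v α) (hK : CondK G) : HasExit G α := by
  by_contra hexit
  exact hK ⟨v, α, hα, fun β hβ => hα.eq_of_not_hasExit hexit hβ⟩

end LoopAt

theorem exists_loopAt_prefix {v : G.V} {l : List G.Ed} (hl : Valid G v l) (hne : l ≠ [])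
    (hret : rngTo G v l = v) : ∃ β : FinPath G, LoopAt G v β ∧ β.edges <+: l := by
  classical
  have hex : ∃ n, 0 < n ∧ rngTo G v (l.take n) = v :=
    ⟨l.length, List.length_pos_iff.mpr hne, by rw [List.take_length]; exact hret⟩
  obtain ⟨hn₀, hn⟩ := Nat.find_spec hex
  refine ⟨⟨v, l.take (Nat.find hex), valid_take _ hl⟩,
    ⟨by simp [List.take_eq_nil_iff, hne, hn₀.ne'], rfl, hn, ?_⟩, List.take_prefix _ _⟩
  intro i e hi he
  rw [List.length_take, lt_min_iff] at hi
  rw [List.getElem?_take_of_lt (by omega)] at he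
  rw [← rngTo_take_succ (w := v) he]
  exact fun hret' => Nat.find_min hex hi.1 ⟨i.succ_pos, hret'⟩

theorem LoopAt.exists_loopAt_ne {v : G.V} {α : FinPath G} (hα : LoopAt G v α) {i : ℕ}
    {e f : G.Ed} (he : α.edges[i]? = some e) (hfe : f ≠ e) (hf : G.src f = G.src e)
    (hback : Reach G (G.rng f) v) : ∃ β : FinPath G, LoopAt G v β ∧ β ≠ α := by
  obtain ⟨δ, hδ, hδv⟩ := hback
  have hl : Valid G v (α.edges.take i ++ f :: δ.edges) := by
    rw [valid_append]
    exact ⟨valid_take i hα.valid, hf.trans (src_eq_rngTo_take hα.valid he), hδ ▸ δ.valid⟩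
  have hret : rngTo G v (α.edges.take i ++ f :: δ.edges) = v := by
    rw [rngTo_append]
    show rngTo G (G.rng f) δ.edges = v
    rw [← hδ]
    exact hδv
  obtain ⟨β, hβ, hpre⟩ := exists_loopAt_prefix hl (by simp) hret
  refine ⟨β, hβ, ?_⟩
  rintro rfl
  -- the loop runs through `e` where the closed walk takes the exit `f`
  have hpre' : β.edges.take i ++ [e] <+: β.edges.take i ++ f :: δ.edges := by
    rw [← Option.toList_some, ← he, ← List.take_add_one]
    exact (List.take_prefix _ _).trans hpre
  rw [List.prefix_append_right_inj, List.cons_prefix_cons] at hpre'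
  exact hfe hpre'.1.symm

section HeredSaturTrivial

variable (hmin : HeredSaturTrivial G)
include hmin

theorem HeredSaturTrivial.exists_reach {S : Set G.V}
    (hS : ∀ s ∈ S, {e | G.src e = s}.Finite → ∃ e, G.src e = s ∧ ∃ t ∈ S, Reach G (G.rng e) t)
    {s : G.V} (hs : s ∈ S) (u : G.V) : ∃ t ∈ S, Reach G u t := by
  by_contra hu
  let H : Set G.V := {x | ¬ ∃ t ∈ S, Reach G x t}
  have hered : Hered G H := fun x hx w hxw ⟨t, ht, hwt⟩ => hx ⟨t, ht, hxw.trans hwt⟩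
  have satur : Satur G H := by
    rintro w hfin hall ⟨t, ht, hwt⟩
    rcases hwt.eq_or_exists_edge with rfl | ⟨e, he, het⟩
    · obtain ⟨e, he, hS'⟩ := hS w ht hfin
      exact hall e he hS'
    · exact hall e he ⟨t, ht, het⟩
  have hsH : s ∈ H := hmin u H hered satur hu ▸ Set.mem_univ s
  exact hsH ⟨s, hs, reach_refl s⟩

theorem HeredSaturTrivial.cofinal : Cofinal G := by
  intro v z
  obtain ⟨_, ⟨n, rfl⟩, hv⟩ := hmin.exists_reach (S := Set.range fun n => G.rng (z.seq n))
    (fun _ ⟨n, hn⟩ _ => ⟨z.seq (n + 1), hn ▸ z.valid n, _, ⟨n + 1, rfl⟩, reach_refl _⟩)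
    ⟨0, rfl⟩ v
  exact ⟨n, hv⟩

theorem HeredSaturTrivial.reach_of_vinf {w : G.V} (hw : Vinf G w) (v : G.V) : Reach G v w := by
  obtain ⟨_, rfl, hv⟩ := hmin.exists_reach (S := {w}) (fun _ hs hfin => absurd (hs ▸ hfin) hw)
    rfl v
  exact hv

theorem HeredSaturTrivial.condK (hexit : ∀ (v : G.V) (α : FinPath G), LoopAt G v α → HasExit G α) :
    CondK G := by
  rintro ⟨v, α, hα, huniq⟩
  obtain ⟨i, e, he, f, hfe, hf⟩ := hexit v α hα
  obtain ⟨e₀, he₀, hloop⟩ := hα.exists_edge_reach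
  obtain ⟨_, rfl, hback⟩ := hmin.exists_reach (S := {v})
    (by rintro _ rfl -; exact ⟨e₀, he₀, _, rfl, hloop⟩) rfl (G.rng f)
  obtain ⟨β, hβ, hβα⟩ := hα.exists_loopAt_ne he hfe hf hback
  exact hβα (huniq β hβ)

end HeredSaturTrivial

theorem heredSaturTrivial_of_cofinal (hcof : Cofinal G)
    (hreach : ∀ v w : G.V, Vinf G w → Reach G v w) : HeredSaturTrivial G := by
  intro v H hered satur hv
  refine Set.eq_univ_of_forall fun u => by_contra fun hu => ?_
  have hstep : ∀ x, x ∉ H → ∃ e, G.src e = x ∧ G.rng e ∉ H := by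
    intro x hx
    by_contra! hall
    rcases Set.finite_or_infinite {e | G.src e = x} with hfin | hinf
    · exact hx (satur x hfin hall)
    · exact hx (hered v hv x (hreach v x hinf))
  obtain ⟨z, hz⟩ := exists_infPath_forall_rng (· ∉ H) hstep hu
  obtain ⟨n, hn⟩ := hcof v z
  exact hz n (hered v hv _ hn)

theorem szymanski_conditions_equiv_general (G : Graph) :
    (CondK G ∧
      (∀ (v : G.V) (z : InfPath G), ∃ n : ℕ, Reach G v (G.rng (z.seq n))) ∧
      (∀ v w : G.V, Vinf G w → Reach G v w)) ↔
    ((∀ (v : G.V) (α : FinPath G), LoopAt G v α → HasExit G α) ∧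
      (∀ v : G.V, ∀ H : Set G.V, Hered G H → Satur G H → v ∈ H → H = Set.univ)) := by
  constructor
  · rintro ⟨hK, hcof, hreach⟩
    exact ⟨fun v α hα => hα.hasExit_of_condK hK, heredSaturTrivial_of_cofinal hcof hreach⟩
  · rintro ⟨hexit, hmin⟩
    exact ⟨HeredSaturTrivial.condK hmin hexit, HeredSaturTrivial.cofinal hmin,
      fun v w hw => HeredSaturTrivial.reach_of_vinf hmin hw v⟩

/-- The conditions (K), cofinality, and reachability of every
`V_∞`-vertex from every vertex together are equivalent to: every loop has an exit, and
for every vertex `v` the smallest hereditary saturated subset of `V` containing `v` is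
`V` itself. -/
theorem szymanski_conditions_equiv (G : Graph) [Countable G.V] [Countable G.Ed]
    (hns : ∀ v : G.V, ∃ e : G.Ed, G.src e = v) :
    (CondK G ∧
      (∀ (v : G.V) (z : InfPath G), ∃ n : ℕ, Reach G v (G.rng (z.seq n))) ∧
      (∀ v w : G.V, Vinf G w → Reach G v w)) ↔
    ((∀ (v : G.V) (α : FinPath G), LoopAt G v α → HasExit G α) ∧
      (∀ v : G.V, ∀ H : Set G.V, Hered G H → Satur G H → v ∈ H → H = Set.univ)) :=
  szymanski_conditions_equiv_general G

end GraphCstar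
end
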